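/- Let R be a finitely generated ℤ-algebra, 𝔪 ⊂ R a maximal ideal, p the characteristic of R/𝔪, and n ≥ 1. For an ideal I of the local ring R_𝔪, let W_n(I) denote the kernel of the ring homomorphism W_n(R_𝔪) → W_n(R_𝔪/I). Then the filtrations (W_n(𝔪^i R_𝔪))_{i≥1} and ((W_n(𝔪 R_𝔪))^i)_{i≥1} of W_n(R_𝔪) induce the same topology: for every i ≥ 1 there exists j ≥ 1 with (W_n(𝔪 R_𝔪))^j ⊆ W_n(𝔪^i R_𝔪), and for every i ≥ 1 there exists j ≥ 1 with W_n(𝔪^j R_𝔪) ⊆ (W_n(𝔪 R_𝔪))^i. -/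

import Mathlib

/-!
`W_n(I)` is generated as an ideal by the truncations of `V^k [a]`, `a ∈ I`: subtracting a sum of
such terms kills the lowest nonzero coefficient of a Witt vector with coefficients in `I`. By the
projection formula `V^k x * y = V^k (x * F^k y)` and `F^k V^k = p^k`, a product
`V^a [u] * V^b [v]` with `a ≤ b` equals `V^a (V^(b-a) [u^(p^(b-a)) * v] * p^a)`, hence has
coefficients in `IJ`; so `W_n(𝔫)^i ⊆ W_n(𝔫^i)`. Conversely, for `N = i * p^(n-1)`, `k < n` and
`f, b ∈ 𝔫`, `V^k [f^N * b] = V^k [b] * [f^(p^(n-1-k))]^i` lies in `W_n(𝔫)^(i+1)`; the elements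
`f^N * b` include `f^(N+1)`, so, `𝔫` being finitely generated, they span an ideal containing a
power of `𝔫`.
-/

namespace TruncatedWittVector

variable {p : ℕ} [Fact p.Prime] {n : ℕ} {R S : Type*} [CommRing R] [CommRing S]

/-- Functoriality of truncated Witt vectors: the ring homomorphism
`W_n(R) → W_n(S)` induced by a ring homomorphism `R → S`. -/
noncomputable def map (f : R →+* S) :
    TruncatedWittVector p n R →+* TruncatedWittVector p n S :=
  RingHom.liftOfRightInverse (WittVector.truncate n) out truncateFun_out
    ⟨(WittVector.truncate n).comp (WittVector.map f), by
      intro x hx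
      rw [WittVector.mem_ker_truncate] at hx
      rw [RingHom.mem_ker, RingHom.comp_apply, ← RingHom.mem_ker,
        WittVector.mem_ker_truncate]
      intro i hi
      rw [WittVector.map_coeff, hx i hi, map_zero]⟩

/-- `map f` is the coefficientwise application of `f`. -/
theorem map_coeff' (f : R →+* S) (x : TruncatedWittVector p n R) (i : Fin n) :
    (map f x).coeff i = f (x.coeff i) := by
  obtain ⟨y, rfl⟩ := WittVector.truncate_surjective p n R x
  have h1 : map f (WittVector.truncate n y) =
      WittVector.truncate n (WittVector.map f y) :=
    RingHom.liftOfRightInverse_comp_apply _ _ _ _ y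
  rw [h1, WittVector.coeff_truncate, WittVector.coeff_truncate, WittVector.map_coeff]

end TruncatedWittVector

/-- For an ideal `I ⊆ S`, the ideal `W_n(I) = ker (W_n(S) → W_n(S/I))` of `W_n(S)`. -/
noncomputable def wittIdeal (p n : ℕ) [Fact p.Prime] {S : Type*} [CommRing S] (I : Ideal S) :
    Ideal (TruncatedWittVector p n S) :=
  RingHom.ker (TruncatedWittVector.map (p := p) (n := n) (Ideal.Quotient.mk I))

namespace WittVector

variable {p : ℕ} [hp : Fact p.Prime] {S : Type*} [CommRing S]

local notation "𝕎" => WittVector p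

theorem frobenius_teichmuller_of_invertible [Invertible (p : S)] (r : S) :
    frobenius (teichmuller p r) = teichmuller p (r ^ p) := by
  apply (ghostMap.bijective_of_invertible p S).1
  funext k
  rw [ghostMap_apply, ghostMap_apply, ghostComponent_frobenius, ghostComponent_teichmuller,
    ghostComponent_teichmuller, ← pow_mul, ← pow_succ']

theorem frobenius_teichmuller (r : S) :
    frobenius (teichmuller p r) = teichmuller p (r ^ p) := by
  obtain ⟨x, rfl⟩ := MvPolynomial.counit_surjective S r
  have hx : frobenius (teichmuller p x) = teichmuller p (x ^ p) := by
    refine map_injective (MvPolynomial.map (Int.castRingHom ℚ))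
      (MvPolynomial.map_injective _ Int.cast_injective) ?_
    rw [(frobenius_isPoly p).map, map_teichmuller, frobenius_teichmuller_of_invertible,
      map_teichmuller, map_pow (MvPolynomial.map (Int.castRingHom ℚ))]
  rw [← map_teichmuller, ← (frobenius_isPoly p).map, hx, map_teichmuller, map_pow]

theorem iterate_frobenius_teichmuller (r : S) (k : ℕ) :
    frobenius^[k] (teichmuller p r) = teichmuller p (r ^ p ^ k) := by
  induction k with
  | zero => simp
  | succ k ih =>
    rw [Function.iterate_succ_apply', ih, frobenius_teichmuller, ← pow_mul, pow_succ]

theorem iterate_frobenius_iterate_verschiebung (x : 𝕎 S) (k : ℕ) :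
    frobenius^[k] (verschiebung^[k] x) = x * p ^ k := by
  induction k generalizing x with
  | zero => simp
  | succ k ih =>
    rw [Function.iterate_succ_apply', Function.iterate_succ_apply, ih, map_mul,
      frobenius_verschiebung, map_pow, map_natCast, pow_succ', mul_assoc]

theorem truncate_iterate_verschiebung {n k : ℕ} (h : n ≤ k) (x : 𝕎 S) :
    truncate n (verschiebung^[k] x) = 0 := by
  rw [← RingHom.mem_ker, mem_ker_truncate]
  exact fun r hr => iterate_verschiebung_coeff_eq_zero x (hr.trans_le h)

variable (p) in
noncomputable def coeffIdeal (𝔞 : Ideal S) : Ideal (𝕎 S) :=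
  RingHom.ker (map (Ideal.Quotient.mk 𝔞))

variable {𝔞 : Ideal S}

theorem mem_coeffIdeal {x : 𝕎 S} : x ∈ coeffIdeal p 𝔞 ↔ ∀ r, x.coeff r ∈ 𝔞 := by
  simp only [coeffIdeal, RingHom.mem_ker, WittVector.ext_iff, map_coeff, zero_coeff,
    Ideal.Quotient.eq_zero_iff_mem]

theorem teichmuller_mem_coeffIdeal {r : S} (hr : r ∈ 𝔞) : teichmuller p r ∈ coeffIdeal p 𝔞 := by
  refine mem_coeffIdeal.mpr fun k => ?_
  rcases k.eq_zero_or_pos with rfl | hk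
  · rwa [teichmuller_coeff_zero]
  · rw [teichmuller_coeff_pos p r k hk]
    exact 𝔞.zero_mem

theorem iterate_verschiebung_mem_coeffIdeal {x : 𝕎 S} (hx : x ∈ coeffIdeal p 𝔞) (k : ℕ) :
    verschiebung^[k] x ∈ coeffIdeal p 𝔞 := by
  refine mem_coeffIdeal.mpr fun r => ?_
  rcases lt_or_ge r k with hr | hr
  · rw [iterate_verschiebung_coeff_eq_zero x hr]
    exact 𝔞.zero_mem
  · obtain ⟨m, rfl⟩ := Nat.exists_eq_add_of_le' hr
    rw [iterate_verschiebung_coeff]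
    exact mem_coeffIdeal.mp hx m

theorem shift_mem_coeffIdeal {x : 𝕎 S} (hx : x ∈ coeffIdeal p 𝔞) (k : ℕ) :
    x.shift k ∈ coeffIdeal p 𝔞 :=
  mem_coeffIdeal.mpr fun r => by rw [shift_coeff]; exact mem_coeffIdeal.mp hx _

theorem iterate_verschiebung_teichmuller_mul_mem {I J : Ideal S} {u v : S} (hu : u ∈ I)
    (hv : v ∈ J) (a b : ℕ) :
    verschiebung^[a] (teichmuller p u) * verschiebung^[b] (teichmuller p v) ∈
      coeffIdeal p (I * J) := by
  wlog hab : a ≤ b generalizing I J u v a b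
  · rw [mul_comm I J, mul_comm (verschiebung^[a] (teichmuller p u))]
    exact this hv hu b a (le_of_not_ge hab)
  obtain ⟨c, rfl⟩ := Nat.exists_eq_add_of_le hab
  have key : verschiebung^[a] (teichmuller p u) * verschiebung^[a + c] (teichmuller p v) =
      verschiebung^[a] (verschiebung^[c] (teichmuller p (u ^ p ^ c * v)) * (p : 𝕎 S) ^ a) := by
    rw [iterate_verschiebung_mul_left, Function.iterate_add_apply,
      iterate_frobenius_iterate_verschiebung, ← mul_assoc, mul_comm (teichmuller p u),
      iterate_verschiebung_mul_left, iterate_frobenius_teichmuller, ← map_mul, mul_comm v]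
  rw [key]
  refine iterate_verschiebung_mem_coeffIdeal (Ideal.mul_mem_right _ _
    (iterate_verschiebung_mem_coeffIdeal (teichmuller_mem_coeffIdeal ?_) c)) a
  exact Ideal.mul_mem_mul (I.pow_mem_of_mem hu _ (pow_pos hp.out.pos c)) hv

end WittVector

open WittVector

section WittIdeal

open scoped Pointwise

variable {p : ℕ} [hp : Fact p.Prime] {n : ℕ} {S : Type*} [CommRing S]

theorem mem_wittIdeal_iff {𝔞 : Ideal S} {x : TruncatedWittVector p n S} :
    x ∈ wittIdeal p n 𝔞 ↔ ∀ i, x.coeff i ∈ 𝔞 := by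
  simp only [wittIdeal, RingHom.mem_ker, TruncatedWittVector.ext_iff,
    TruncatedWittVector.map_coeff', TruncatedWittVector.coeff_zero,
    Ideal.Quotient.eq_zero_iff_mem]

theorem truncate_mem_wittIdeal {𝔞 : Ideal S} {x : WittVector p S} (hx : x ∈ coeffIdeal p 𝔞) :
    truncate n x ∈ wittIdeal p n 𝔞 :=
  mem_wittIdeal_iff.mpr fun i => by rw [coeff_truncate]; exact mem_coeffIdeal.mp hx i

theorem wittIdeal_eq_map_truncate (𝔞 : Ideal S) :
    wittIdeal p n 𝔞 = (coeffIdeal p 𝔞).map (truncate n) := by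
  refine le_antisymm (fun x hx => ?_)
    (Ideal.map_le_iff_le_comap.mpr fun _ => truncate_mem_wittIdeal)
  have hout : truncate n x.out = x := by
    ext i
    rw [coeff_truncate, TruncatedWittVector.coeff_out]
  rw [← hout]
  refine Ideal.mem_map_of_mem _ (mem_coeffIdeal.mpr fun r => ?_)
  by_cases hr : r < n
  · exact (TruncatedWittVector.coeff_out x ⟨r, hr⟩).symm ▸ mem_wittIdeal_iff.mp hx _
  · simp [TruncatedWittVector.out, hr]

theorem wittIdeal_mono {I J : Ideal S} (h : I ≤ J) : wittIdeal p n I ≤ wittIdeal p n J :=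
  fun _ hx => mem_wittIdeal_iff.mpr fun i => h (mem_wittIdeal_iff.mp hx i)

variable (p n) in
def verschiebungTeichmullers (G : Set S) : Set (TruncatedWittVector p n S) :=
  {x | ∃ k, ∃ g ∈ G, truncate n (verschiebung^[k] (teichmuller p g)) = x}

theorem truncate_iterate_verschiebung_mem_span {G : Set S} (hG : ∀ c, ∀ g ∈ G, c * g ∈ G)
    (d k : ℕ) (hk : n ≤ k + d) {y : WittVector p S} (hy : y ∈ coeffIdeal p (Ideal.span G)) :
    truncate n (verschiebung^[k] y) ∈ Ideal.span (verschiebungTeichmullers p n G) := by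
  induction d generalizing k y with
  | zero =>
    rw [truncate_iterate_verschiebung (by omega)]
    exact zero_mem _
  | succ d ih =>
    obtain ⟨m, c, g, hsum⟩ := Submodule.mem_span_set'.mp (mem_coeffIdeal.mp hy 0)
    set w := ∑ i, teichmuller p (c i * g i)
    have hw : truncate n (verschiebung^[k] w) ∈ Ideal.span (verschiebungTeichmullers p n G) :=
      Finset.sum_induction _ (fun z => truncate n (verschiebung^[k] z) ∈ _)
        (fun a b ha hb => by rw [iterate_map_add, map_add]; exact add_mem ha hb)
        (by rw [iterate_map_zero, map_zero]; exact zero_mem _)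
        (fun i _ => Ideal.subset_span ⟨k, _, hG _ _ (g i).2, rfl⟩)
    have hyw : y - w ∈ coeffIdeal p (Ideal.span G) :=
      sub_mem hy (sum_mem fun i _ =>
        teichmuller_mem_coeffIdeal (Ideal.subset_span (hG _ _ (g i).2)))
    have hw0 : constantCoeff w = y.coeff 0 := by
      simp only [w, map_sum, constantCoeff_apply, teichmuller_coeff_zero, ← hsum, smul_eq_mul]
    have hyw0 : (y - w).coeff 0 = 0 := by
      rw [← constantCoeff_apply, map_sub, hw0, constantCoeff_apply, sub_self]
    have hsplit : y = w + verschiebung^[1] ((y - w).shift 1) := by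
      rw [← eq_iterate_verschiebung (by simpa using hyw0)]
      ring
    rw [hsplit, iterate_map_add, ← Function.iterate_add_apply, map_add]
    exact add_mem hw (ih (k + 1) (by omega) (shift_mem_coeffIdeal hyw 1))

theorem wittIdeal_span_le_span {G : Set S} (hG : ∀ c, ∀ g ∈ G, c * g ∈ G) :
    wittIdeal p n (Ideal.span G) ≤ Ideal.span (verschiebungTeichmullers p n G) := by
  rw [wittIdeal_eq_map_truncate, Ideal.map_le_iff_le_comap]
  exact fun y hy => truncate_iterate_verschiebung_mem_span hG n 0 (by omega) hy

theorem wittIdeal_mul_le (I J : Ideal S) :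
    wittIdeal p n I * wittIdeal p n J ≤ wittIdeal p n (I * J) := by
  have hspan (K : Ideal S) :
      wittIdeal p n K ≤ Ideal.span (verschiebungTeichmullers p n (K : Set S)) := by
    have := wittIdeal_span_le_span (p := p) (n := n) (G := K) fun c _ => K.mul_mem_left c
    rwa [Ideal.span_eq] at this
  calc wittIdeal p n I * wittIdeal p n J
      ≤ Ideal.span (verschiebungTeichmullers p n (I : Set S)) *
          Ideal.span (verschiebungTeichmullers p n (J : Set S)) :=
        Ideal.mul_mono (hspan I) (hspan J)
    _ = Ideal.span (verschiebungTeichmullers p n (I : Set S) *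
          verschiebungTeichmullers p n (J : Set S)) := Ideal.span_mul_span' _ _
    _ ≤ wittIdeal p n (I * J) := by
        rw [Ideal.span_le]
        rintro _ ⟨_, ⟨a, u, hu, rfl⟩, _, ⟨b, v, hv, rfl⟩, rfl⟩
        simp only [SetLike.mem_coe, ← map_mul]
        exact truncate_mem_wittIdeal (iterate_verschiebung_teichmuller_mul_mem hu hv a b)

theorem wittIdeal_pow_le (I : Ideal S) (i : ℕ) : wittIdeal p n I ^ i ≤ wittIdeal p n (I ^ i) := by
  induction i with
  | zero => exact fun x _ => mem_wittIdeal_iff.mpr fun _ => by simp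
  | succ i ih =>
    rw [pow_succ, pow_succ]
    exact (Ideal.mul_mono_left ih).trans (wittIdeal_mul_le _ _)

theorem truncate_iterate_verschiebung_teichmuller_mem_pow {I : Ideal S} {f b : S} (hf : f ∈ I)
    (hb : b ∈ I) (i : ℕ) {k : ℕ} (hk : k < n) :
    truncate n (verschiebung^[k] (teichmuller p (f ^ (i * p ^ (n - 1)) * b))) ∈
      wittIdeal p n I ^ (i + 1) := by
  set u := f ^ p ^ (n - 1 - k)
  have hexp : i * p ^ (n - 1) = p ^ (n - 1 - k) * i * p ^ k := by
    rw [mul_comm _ i, mul_assoc, ← pow_add, Nat.sub_add_cancel (Nat.le_sub_one_of_lt hk)]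
  have hpow : f ^ (i * p ^ (n - 1)) = (u ^ i) ^ p ^ k := by
    rw [hexp, pow_mul, pow_mul]
  have key : verschiebung^[k] (teichmuller p (f ^ (i * p ^ (n - 1)) * b)) =
      verschiebung^[k] (teichmuller p b) * teichmuller p u ^ i := by
    rw [iterate_verschiebung_mul_left, ← map_pow, iterate_frobenius_teichmuller, hpow, ← map_mul,
      mul_comm b]
  rw [key, map_mul, map_pow, pow_succ']
  exact Ideal.mul_mem_mul (truncate_mem_wittIdeal
      (iterate_verschiebung_mem_coeffIdeal (teichmuller_mem_coeffIdeal hb) k))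
    (Ideal.pow_mem_pow (truncate_mem_wittIdeal
      (teichmuller_mem_coeffIdeal (I.pow_mem_of_mem hf _ (pow_pos hp.out.pos _)))) i)

theorem eventually_wittIdeal_pow_le_pow {I : Ideal S} (hI : I.FG) (i : ℕ) :
    ∀ᶠ j in Filter.atTop, wittIdeal p n (I ^ j) ≤ wittIdeal p n I ^ (i + 1) := by
  set G : Set S := {g | ∃ f ∈ I, ∃ b ∈ I, f ^ (i * p ^ (n - 1)) * b = g}
  have hG : ∀ c, ∀ g ∈ G, c * g ∈ G := by
    rintro c _ ⟨f, hf, b, hb, rfl⟩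
    exact ⟨f, hf, c * b, I.mul_mem_left c hb, by ring⟩
  have hrad : I ≤ (Ideal.span G).radical := fun f hf =>
    ⟨_ + 1, Ideal.subset_span ⟨f, hf, f, hf, (pow_succ f _).symm⟩⟩
  obtain ⟨c, hc⟩ := Ideal.exists_pow_le_of_le_radical_of_fg hrad hI
  refine Filter.eventually_atTop.mpr ⟨c, fun j hj => ?_⟩
  calc wittIdeal p n (I ^ j)
      ≤ wittIdeal p n (Ideal.span G) := wittIdeal_mono ((Ideal.pow_le_pow_right hj).trans hc)
    _ ≤ Ideal.span (verschiebungTeichmullers p n G) := wittIdeal_span_le_span hG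
    _ ≤ wittIdeal p n I ^ (i + 1) := by
        rw [Ideal.span_le]
        rintro _ ⟨k, _, ⟨f, hf, b, hb, rfl⟩, rfl⟩
        rcases lt_or_ge k n with hk | hk
        · exact truncate_iterate_verschiebung_teichmuller_mem_pow hf hb i hk
        · rw [SetLike.mem_coe, truncate_iterate_verschiebung hk]
          exact zero_mem _

end WittIdeal

theorem stmt_6_general (p : ℕ) [Fact p.Prime] (n : ℕ)
    (R : Type*) [CommRing R] [Algebra.FiniteType ℤ R]
    (𝔪 : Ideal R) [𝔪.IsMaximal] :
    (∀ i : ℕ, 1 ≤ i → ∃ j : ℕ, 1 ≤ j ∧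
      (wittIdeal p n (𝔪.map (algebraMap R (Localization.AtPrime 𝔪)))) ^ j ≤
        wittIdeal p n ((𝔪 ^ i).map (algebraMap R (Localization.AtPrime 𝔪)))) ∧
    (∀ i : ℕ, 1 ≤ i → ∃ j : ℕ, 1 ≤ j ∧
      wittIdeal p n ((𝔪 ^ j).map (algebraMap R (Localization.AtPrime 𝔪))) ≤
        (wittIdeal p n (𝔪.map (algebraMap R (Localization.AtPrime 𝔪)))) ^ i) := by
  have : IsNoetherianRing (Localization.AtPrime 𝔪) :=
    IsLocalization.isNoetherianRing 𝔪.primeCompl _ (Algebra.FiniteType.isNoetherianRing ℤ R)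
  refine ⟨fun i hi => ⟨i, hi, ?_⟩, fun i hi => ?_⟩
  · rw [Ideal.map_pow]
    exact wittIdeal_pow_le _ i
  · obtain ⟨i, rfl⟩ := Nat.exists_eq_add_of_le' hi
    obtain ⟨j, hj, hj1⟩ := ((eventually_wittIdeal_pow_le_pow (p := p) (n := n)
      (IsNoetherian.noetherian (𝔪.map (algebraMap R (Localization.AtPrime 𝔪)))) i).and
      (Filter.eventually_ge_atTop 1)).exists
    exact ⟨j, hj1, by rwa [Ideal.map_pow]⟩

theorem stmt_6 (p : ℕ) [Fact p.Prime] (n : ℕ) (hn : 1 ≤ n)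
    (R : Type*) [CommRing R] [Algebra.FiniteType ℤ R]
    (𝔪 : Ideal R) [𝔪.IsMaximal] [CharP (R ⧸ 𝔪) p] :
    (∀ i : ℕ, 1 ≤ i → ∃ j : ℕ, 1 ≤ j ∧
      (wittIdeal p n (𝔪.map (algebraMap R (Localization.AtPrime 𝔪)))) ^ j ≤
        wittIdeal p n ((𝔪 ^ i).map (algebraMap R (Localization.AtPrime 𝔪)))) ∧
    (∀ i : ℕ, 1 ≤ i → ∃ j : ℕ, 1 ≤ j ∧
      wittIdeal p n ((𝔪 ^ j).map (algebraMap R (Localization.AtPrime 𝔪))) ≤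
        (wittIdeal p n (𝔪.map (algebraMap R (Localization.AtPrime 𝔪)))) ^ i) :=
  stmt_6_general p n R 𝔪
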